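/- arXiv:1805.10268 — 2 statements merged into one kernel-verified Lean document; each statement's English description precedes it below -/
import Mathlib

section
/- Let C(n,u) be a t-level EII code over a finite field F with u_t = n, in which each horizontal code C_i is an MDS [n, n−u_i, u_i+1] code over F and each vertical code V_{t−1−i} is an MDS [m, m−ŝ_{i+1}, ŝ_{i+1}+1] code over F^{u_{i+1}−u_i}, for 0 ≤ i ≤ t−1. Then C(n,u) has F-dimension mn − Σ_{i=0}^{t} s_i·u_i and minimum distance d ≥ min{ (u_i+1)(ŝ_{i+1}+1) : 0 ≤ i ≤ t−1 }. -/
open scoped BigOperators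

section Defs

variable {F : Type*} [Field F]

/-- `C` has minimum (symbol-)Hamming distance exactly `d`. -/
def HasMinDist {ι S : Type*} [Fintype ι] [Zero S] [DecidableEq S]
    (C : Set (ι → S)) (d : ℕ) : Prop :=
  (∀ c ∈ C, c ≠ 0 → d ≤ hammingNorm c) ∧ ∃ c ∈ C, c ≠ 0 ∧ hammingNorm c = d

/-- weight of an `m × n` array: the number of nonzero entries. -/
def arrayWt [DecidableEq F] {m n : ℕ} (A : Matrix (Fin m) (Fin n) F) : ℕ :=
  hammingNorm (fun p : Fin m × Fin n => A p.1 p.2)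

/-- `C` admits a systematic encoder on its first `k` coordinates. -/
def SystematicOn {n : ℕ} (C : Submodule F (Fin n → F)) (k : ℕ) : Prop :=
  Function.Bijective (fun (c : C) (i : Fin k) =>
    if h : (i : ℕ) < n then (c : Fin n → F) ⟨i, h⟩ else 0)

/-- symbols of the array in columns `a, a+1, ..., a+w-1`. -/
def colSymb [Zero F] {m n : ℕ} (A : Matrix (Fin m) (Fin n) F) (a w : ℕ) :
    Fin m → Fin w → F :=
  fun r k => if hk : a + (k : ℕ) < n then A r ⟨a + k, hk⟩ else 0

/-- the 1-level EII code with horizontal code `C0`, vertical code `V0` over `F^w`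
(occupying columns `a,…,a+w-1`), and `a` initial zero columns. -/
def OneLevelEII {m n w : ℕ} (C0 : Submodule F (Fin n → F))
    (V0 : Submodule F (Fin m → Fin w → F)) (a : ℕ) :
    Set (Matrix (Fin m) (Fin n) F) :=
  { A | (∀ r (c : Fin n), (c : ℕ) < a → A r c = 0) ∧ (∀ r, A r ∈ C0) ∧
        colSymb A a w ∈ V0 }

/-- the sum of the 1-level EII component codes of levels `a ≤ i < t`, where level `i`
has horizontal code `Chor i`, vertical code `Vc i` over `F^{u(i+1)-u(i)}`, and
`n - u(i+1)` initial zero columns. -/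
def EIICodeRange {m n : ℕ} (a t : ℕ) (u : ℕ → ℕ)
    (Chor : ℕ → Submodule F (Fin n → F))
    (Vc : (i : ℕ) → Submodule F (Fin m → Fin (u (i + 1) - u i) → F)) :
    Set (Matrix (Fin m) (Fin n) F) :=
  { A | ∃ g : ℕ → Matrix (Fin m) (Fin n) F,
        (∀ i, a ≤ i → i < t → g i ∈ OneLevelEII (Chor i) (Vc i) (n - u (i + 1))) ∧
        A = ∑ i ∈ Finset.Ico a t, g i }

/-- the t-level EII code: sum of the 1-level EII component codes of levels `0 ≤ i < t`. -/
def EIICode {m n : ℕ} (t : ℕ) (u : ℕ → ℕ)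
    (Chor : ℕ → Submodule F (Fin n → F))
    (Vc : (i : ℕ) → Submodule F (Fin m → Fin (u (i + 1) - u i) → F)) :
    Set (Matrix (Fin m) (Fin n) F) :=
  EIICodeRange 0 t u Chor Vc

end Defs

/-!
Each horizontal code `C_i` is systematic on its first `n - u_i` coordinates, so an array of the
level-`i` component is determined by its vertical symbols, and encoding those symbols row by row
identifies that component with `V_i`. In a zero sum of components the lowest nonzero one would have
rows in `C_{i+1}` (by nesting) vanishing on the systematic coordinates of `C_{i+1}`; so the sum is
direct and the dimension is `Σ dim V_i`, which Abel summation turns into `mn - Σ s_i u_i`.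
For the distance, take the lowest level `i` with a nonzero component: every row of the array lies in
`C_i`, at least `ŝ_{i+1} + 1` of the level-`i` vertical symbols are nonzero, and the rows carrying
them are nonzero, hence of weight at least `u_i + 1`.
-/

section EII

open Finset

variable {F : Type*} [Field F]

section Systematic

variable {n k : ℕ} {C : Submodule F (Fin n → F)}

def prefixMap (C : Submodule F (Fin n → F)) (k : ℕ) : C →ₗ[F] (Fin k → F) where
  toFun c i := if h : (i : ℕ) < n then (c : Fin n → F) ⟨i, h⟩ else 0
  map_add' c c' := by ext i; by_cases h : (i : ℕ) < n <;> simp [h]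
  map_smul' a c := by ext i; by_cases h : (i : ℕ) < n <;> simp [h]

lemma prefixMap_apply (c : C) (i : Fin k) :
    prefixMap C k c i = if h : (i : ℕ) < n then (c : Fin n → F) ⟨i, h⟩ else 0 := rfl

lemma SystematicOn.bijective (h : SystematicOn C k) : Function.Bijective (prefixMap C k) := h

noncomputable def SystematicOn.equiv (h : SystematicOn C k) : C ≃ₗ[F] (Fin k → F) :=
  LinearEquiv.ofBijective (prefixMap C k) h.bijective

lemma SystematicOn.equiv_apply (h : SystematicOn C k) (c : C) :
    h.equiv c = prefixMap C k c := rfl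

lemma SystematicOn.coe_equiv_symm_apply (h : SystematicOn C k) (y : Fin k → F) {j : Fin n}
    (hj : (j : ℕ) < k) : (h.equiv.symm y : Fin n → F) j = y ⟨j, hj⟩ := by
  have := congrFun (h.equiv.apply_symm_apply y) ⟨j, hj⟩
  rwa [h.equiv_apply, prefixMap_apply, dif_pos j.2] at this

lemma SystematicOn.eq_of_forall_lt (h : SystematicOn C k) {c c' : Fin n → F} (hc : c ∈ C)
    (hc' : c' ∈ C) (hcc' : ∀ j : Fin n, (j : ℕ) < k → c j = c' j) : c = c' := by
  have : prefixMap C k ⟨c, hc⟩ = prefixMap C k ⟨c', hc'⟩ := by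
    ext i
    simp only [prefixMap_apply]
    split_ifs
    exacts [hcc' _ i.2, rfl]
  exact congrArg Subtype.val (h.bijective.1 this)

end Systematic

section Encode

variable {m n k a w : ℕ} {C : Submodule F (Fin n → F)}

def padMap (a w k : ℕ) : (Fin w → F) →ₗ[F] (Fin k → F) where
  toFun x j := if h : a ≤ (j : ℕ) ∧ (j : ℕ) - a < w then x ⟨j - a, h.2⟩ else 0
  map_add' x y := by ext j; by_cases h : a ≤ (j : ℕ) ∧ (j : ℕ) - a < w <;> simp [h]
  map_smul' c x := by ext j; by_cases h : a ≤ (j : ℕ) ∧ (j : ℕ) - a < w <;> simp [h]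

lemma padMap_apply (x : Fin w → F) (j : Fin k) :
    padMap a w k x j = if h : a ≤ (j : ℕ) ∧ (j : ℕ) - a < w then x ⟨j - a, h.2⟩ else 0 := rfl

noncomputable def SystematicOn.encode (h : SystematicOn C k) (m a w : ℕ) :
    (Fin m → Fin w → F) →ₗ[F] Matrix (Fin m) (Fin n) F :=
  LinearMap.pi fun r => C.subtype ∘ₗ h.equiv.symm.toLinearMap ∘ₗ padMap a w k ∘ₗ LinearMap.proj r

lemma SystematicOn.encode_apply (h : SystematicOn C k) (x : Fin m → Fin w → F) (r : Fin m) :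
    h.encode m a w x r = (h.equiv.symm (padMap a w k (x r)) : Fin n → F) := rfl

lemma SystematicOn.encode_apply_of_lt (h : SystematicOn C k) (hak : a ≤ k)
    (x : Fin m → Fin w → F) (r : Fin m) {j : Fin n} (hj : (j : ℕ) < a) :
    h.encode m a w x r j = 0 := by
  rw [h.encode_apply, h.coe_equiv_symm_apply _ (hj.trans_le hak), padMap_apply,
    dif_neg (by simp; omega)]

lemma SystematicOn.colSymb_encode (h : SystematicOn C k) (hak : a + w ≤ k) (hkn : k ≤ n)
    (x : Fin m → Fin w → F) : colSymb (h.encode m a w x) a w = x := by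
  ext r l
  rw [colSymb, dif_pos (by omega), h.encode_apply, h.coe_equiv_symm_apply _ (by simp; omega),
    padMap_apply, dif_pos (by simp)]
  simp

lemma SystematicOn.encode_mem (h : SystematicOn C k) (hak : a + w ≤ k) (hkn : k ≤ n)
    {V : Submodule F (Fin m → Fin w → F)} {x : Fin m → Fin w → F} (hx : x ∈ V) :
    h.encode m a w x ∈ OneLevelEII C V a :=
  ⟨fun r _ hj => h.encode_apply_of_lt (by omega) x r hj, fun r => (h.equiv.symm _).2,
    by rwa [h.colSymb_encode hak hkn]⟩

lemma SystematicOn.encode_colSymb (h : SystematicOn C k) (hka : k ≤ a + w)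
    {V : Submodule F (Fin m → Fin w → F)} {A : Matrix (Fin m) (Fin n) F}
    (hA : A ∈ OneLevelEII C V a) :
    h.encode m a w (colSymb A a w) = A := by
  funext r
  refine h.eq_of_forall_lt (h.equiv.symm _).2 (hA.2.1 r) fun j hj => ?_
  rw [h.encode_apply, h.coe_equiv_symm_apply _ hj, padMap_apply]
  split_ifs with hja <;> simp only at hja
  · have hlt : a + (j - a) < n := by omega
    simp only [colSymb, hlt, dif_pos]
    exact congrArg (A r) (Fin.ext (by simp only; omega))
  · exact (hA.1 r j (by omega)).symm

end Encode

section Weight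

variable [DecidableEq F] {m n : ℕ}

lemma arrayWt_eq_sum (A : Matrix (Fin m) (Fin n) F) :
    arrayWt A = ∑ r, hammingNorm (A r) := by
  simp only [arrayWt, hammingNorm, card_filter, Fintype.sum_prod_type]

lemma mul_le_arrayWt {S : Type*} [Zero S] [DecidableEq S] {x : Fin m → S}
    {A : Matrix (Fin m) (Fin n) F} {b D : ℕ} (hx : D ≤ hammingNorm x)
    (hA : ∀ r, x r ≠ 0 → b ≤ hammingNorm (A r)) : b * D ≤ arrayWt A :=
  calc b * D ≤ ∑ r ∈ univ.filter (x · ≠ 0), b := by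
        rw [sum_const, smul_eq_mul, mul_comm]; exact Nat.mul_le_mul_right b hx
    _ ≤ ∑ r ∈ univ.filter (x · ≠ 0), hammingNorm (A r) :=
        sum_le_sum fun r hr => hA r (mem_filter.1 hr).2
    _ ≤ arrayWt A := by
        rw [arrayWt_eq_sum]; exact sum_le_sum_of_subset (filter_subset _ _)

end Weight

lemma colSymb_apply_eq_zero {m n : ℕ} {A : Matrix (Fin m) (Fin n) F} {r : Fin m} (hr : A r = 0)
    (a w : ℕ) : colSymb A a w r = 0 := by
  ext l
  simp [colSymb, hr]

section MultiLevel

variable {m n t : ℕ} {u : ℕ → ℕ} {Chor : ℕ → Submodule F (Fin n → F)}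
  {Vc : (i : ℕ) → Submodule F (Fin m → Fin (u (i + 1) - u i) → F)}

lemma sub_add_sub_eq_of_monotoneOn (hu : MonotoneOn u (Set.Iic t)) (hutn : u t = n) {i : ℕ}
    (hi : i < t) : n - u (i + 1) + (u (i + 1) - u i) = n - u i := by
  have h₁ : u i ≤ u (i + 1) := hu (Set.mem_Iic.2 hi.le) (Set.mem_Iic.2 hi) i.le_succ
  have h₂ : u (i + 1) ≤ u t := hu (Set.mem_Iic.2 hi) (Set.mem_Iic.2 le_rfl) hi
  omega

lemma row_eq_zero_of_sum_row_eq_zero (hanti : AntitoneOn Chor (Set.Iio t))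
    (hsys : ∀ i < t, SystematicOn (Chor i) (n - u i)) {g : ℕ → Matrix (Fin m) (Fin n) F}
    (hg : ∀ i < t, g i ∈ OneLevelEII (Chor i) (Vc i) (n - u (i + 1))) {i₀ : ℕ} (hi₀ : i₀ < t)
    (hlow : ∀ i < i₀, g i = 0) {r : Fin m} (hr : ∑ i ∈ range t, g i r = 0) : g i₀ r = 0 := by
  rw [← sum_range_add_sum_Ico _ hi₀.le,
    sum_eq_zero fun i hi => by rw [hlow i (mem_range.1 hi)]; rfl, zero_add,
    sum_eq_sum_Ico_succ_bot hi₀] at hr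
  have hneg : g i₀ r = -∑ i ∈ Ico (i₀ + 1) t, g i r := eq_neg_of_add_eq_zero_left hr
  rcases lt_or_ge (i₀ + 1) t with hlt | hge
  · refine (hsys _ hlt).eq_of_forall_lt ?_ (zero_mem _) ((hg i₀ hi₀).1 r)
    rw [hneg]
    refine neg_mem (sum_mem fun i hi => ?_)
    obtain ⟨hi₁, hit⟩ := mem_Ico.1 hi
    exact hanti hlt hit hi₁ ((hg i hit).2.1 r)
  · rwa [Ico_eq_empty (by omega), sum_empty, neg_zero] at hneg

variable (Vc) in
noncomputable def eiiEncode (hsys : ∀ i < t, SystematicOn (Chor i) (n - u i)) :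
    ((i : Fin t) → Vc i) →ₗ[F] Matrix (Fin m) (Fin n) F :=
  ∑ i : Fin t, (hsys i i.2).encode m (n - u (i + 1)) (u (i + 1) - u i) ∘ₗ (Vc i).subtype ∘ₗ
    LinearMap.proj i

variable (Vc) in
noncomputable def eiiComponent (hsys : ∀ i < t, SystematicOn (Chor i) (n - u i))
    (v : (i : Fin t) → Vc i) (i : ℕ) : Matrix (Fin m) (Fin n) F :=
  if h : i < t then (hsys i h).encode m (n - u (i + 1)) (u (i + 1) - u i) (v ⟨i, h⟩) else 0

lemma eiiEncode_apply (hsys : ∀ i < t, SystematicOn (Chor i) (n - u i))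
    (v : (i : Fin t) → Vc i) : eiiEncode Vc hsys v = ∑ i ∈ range t, eiiComponent Vc hsys v i := by
  simp [eiiEncode, eiiComponent, sum_range]

lemma eiiComponent_mem (hsys : ∀ i < t, SystematicOn (Chor i) (n - u i))
    (hu : MonotoneOn u (Set.Iic t)) (hutn : u t = n) (v : (i : Fin t) → Vc i) {i : ℕ}
    (hi : i < t) : eiiComponent Vc hsys v i ∈ OneLevelEII (Chor i) (Vc i) (n - u (i + 1)) := by
  rw [eiiComponent, dif_pos hi]
  exact (hsys i hi).encode_mem (sub_add_sub_eq_of_monotoneOn hu hutn hi).le (Nat.sub_le _ _)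
    (v ⟨i, hi⟩).2

lemma coe_range_eiiEncode (hsys : ∀ i < t, SystematicOn (Chor i) (n - u i))
    (hu : MonotoneOn u (Set.Iic t)) (hutn : u t = n) :
    (LinearMap.range (eiiEncode Vc hsys) : Set (Matrix (Fin m) (Fin n) F)) =
      EIICode t u Chor Vc := by
  ext A
  constructor
  · rintro ⟨v, rfl⟩
    refine ⟨eiiComponent Vc hsys v, fun i _ hi => eiiComponent_mem hsys hu hutn v hi, ?_⟩
    rw [eiiEncode_apply, range_eq_Ico]
  · rintro ⟨g, hg, rfl⟩
    refine ⟨fun i => ⟨colSymb (g i) _ _, (hg i (Nat.zero_le _) i.2).2.2⟩, ?_⟩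
    rw [eiiEncode_apply, ← range_eq_Ico]
    refine sum_congr rfl fun i hi => ?_
    have hit := mem_range.1 hi
    rw [eiiComponent, dif_pos hit]
    exact (hsys i hit).encode_colSymb (sub_add_sub_eq_of_monotoneOn hu hutn hit).ge
      (hg i (Nat.zero_le _) hit)

lemma eiiEncode_injective (hanti : AntitoneOn Chor (Set.Iio t))
    (hsys : ∀ i < t, SystematicOn (Chor i) (n - u i)) (hu : MonotoneOn u (Set.Iic t))
    (hutn : u t = n) : Function.Injective (eiiEncode Vc hsys) := by
  rw [← LinearMap.ker_eq_bot, LinearMap.ker_eq_bot']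
  intro v hv
  rw [eiiEncode_apply] at hv
  suffices h : ∀ i (hi : i < t), v ⟨i, hi⟩ = 0 from funext fun i => h i i.2
  intro i
  induction i using Nat.strong_induction_on with
  | _ i ih =>
    intro hi
    have hlow : ∀ j < i, eiiComponent Vc hsys v j = 0 := fun j hj => by
      rw [eiiComponent, dif_pos (hj.trans hi), ih j hj (hj.trans hi), ZeroMemClass.coe_zero,
        map_zero]
    have hcomp : eiiComponent Vc hsys v i = 0 := funext fun r =>
      row_eq_zero_of_sum_row_eq_zero hanti hsys (fun j hj => eiiComponent_mem hsys hu hutn v hj)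
        hi hlow ((Finset.sum_apply r _ _).symm.trans (congrFun hv r))
    rw [eiiComponent, dif_pos hi] at hcomp
    have hband := (sub_add_sub_eq_of_monotoneOn hu hutn hi).le
    apply Subtype.ext
    rw [← (hsys i hi).colSymb_encode hband (Nat.sub_le _ _)
      (v ⟨i, hi⟩ : Fin m → Fin (u (i + 1) - u i) → F), hcomp]
    exact funext fun r => colSymb_apply_eq_zero rfl _ _

lemma exists_mul_le_arrayWt_of_mem_EIICode [DecidableEq F]
    (hanti : AntitoneOn Chor (Set.Iio t)) (hsys : ∀ i < t, SystematicOn (Chor i) (n - u i))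
    (hu : MonotoneOn u (Set.Iic t)) (hutn : u t = n) {d : ℕ → ℕ}
    (hCdist : ∀ i < t, ∀ c ∈ Chor i, c ≠ 0 → u i + 1 ≤ hammingNorm c)
    (hVdist : ∀ i < t, ∀ x ∈ Vc i, x ≠ 0 → d i ≤ hammingNorm x)
    {A : Matrix (Fin m) (Fin n) F} (hA : A ∈ EIICode t u Chor Vc) (hA0 : A ≠ 0) :
    ∃ i < t, (u i + 1) * d i ≤ arrayWt A := by
  obtain ⟨g, hg, rfl⟩ := hA
  replace hg : ∀ i < t, g i ∈ OneLevelEII (Chor i) (Vc i) (n - u (i + 1)) :=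
    fun i => hg i i.zero_le
  rw [← range_eq_Ico] at hA0 ⊢
  have hex : ∃ i, i < t ∧ g i ≠ 0 := by
    by_contra! h
    exact hA0 (sum_eq_zero fun i hi => h i (mem_range.1 hi))
  classical
  obtain ⟨hi₀, hgi₀⟩ := Nat.find_spec hex
  set i₀ := Nat.find hex
  have hlow : ∀ i < i₀, g i = 0 := fun i hi => by
    by_contra hne
    exact Nat.find_min hex hi ⟨hi.trans hi₀, hne⟩
  refine ⟨i₀, hi₀, mul_le_arrayWt (x := colSymb (g i₀) (n - u (i₀ + 1)) (u (i₀ + 1) - u i₀))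
    (hVdist i₀ hi₀ _ (hg i₀ hi₀).2.2 ?_) fun r hr => hCdist i₀ hi₀ _ ?_ ?_⟩
  · intro hx
    apply hgi₀
    rw [← (hsys i₀ hi₀).encode_colSymb (sub_add_sub_eq_of_monotoneOn hu hutn hi₀).ge (hg i₀ hi₀),
      hx, map_zero]
  · refine (Finset.sum_apply r _ g).symm ▸ sum_mem fun i hi => ?_
    rcases lt_or_ge i i₀ with h | h
    · rw [hlow i h]
      exact zero_mem _
    · exact hanti hi₀ (mem_range.1 hi) h ((hg i (mem_range.1 hi)).2.1 r)
  · intro hAr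
    exact hr (colSymb_apply_eq_zero (row_eq_zero_of_sum_row_eq_zero hanti hsys hg hi₀ hlow
      ((Finset.sum_apply r _ _).symm.trans hAr)) _ _)

end MultiLevel

lemma sum_prefix_mul_sub_add (s u : ℕ → ℕ) {t : ℕ} (hu : ∀ i < t, u i ≤ u (i + 1)) :
    ∑ i ∈ range t, (∑ j ∈ range (i + 1), s j) * (u (i + 1) - u i) +
      ∑ i ∈ range (t + 1), s i * u i = (∑ j ∈ range (t + 1), s j) * u t := by
  induction t with
  | zero => simp
  | succ t ih =>
    have ih := ih fun i hi => hu i (by omega)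
    obtain ⟨e, he⟩ := Nat.exists_eq_add_of_le (hu t (by omega))
    rw [sum_range_succ, sum_range_succ (fun i => s i * u i) (t + 1), sum_range_succ s (t + 1),
      he, Nat.add_sub_cancel_left]
    linarith

lemma sum_sub_sum_Icc_mul_sub (s u : ℕ → ℕ) {t : ℕ} (hu : ∀ i < t, u i ≤ u (i + 1)) :
    ∑ i ∈ range t, (∑ j ∈ range (t + 1), s j - ∑ j ∈ Icc (i + 1) t, s j) * (u (i + 1) - u i) =
      (∑ j ∈ range (t + 1), s j) * u t - ∑ i ∈ range (t + 1), s i * u i := by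
  rw [← sum_prefix_mul_sub_add s u hu, Nat.add_sub_cancel]
  refine sum_congr rfl fun i hi => ?_
  rw [← Ico_add_one_right_eq_Icc,
    ← sum_range_add_sum_Ico s (by simp at hi; omega : i + 1 ≤ t + 1), Nat.add_sub_cancel]

end EII

/-- If in a t-level EII code with `u_t = n` all horizontal codes are
MDS `[n, n−u_i, u_i+1]` codes and all vertical codes are MDS `[m, m−ŝ_{i+1}, ŝ_{i+1}+1]`
codes over `F^{u_{i+1}−u_i}`, then the code has dimension `mn − Σ s_i·u_i` and minimum
distance `d ≥ min {(u_i+1)(ŝ_{i+1}+1) : 0 ≤ i ≤ t−1}`. -/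
theorem stmt5 {F : Type*} [Field F] [DecidableEq F]
    {t n m : ℕ} (ht : 1 ≤ t)
    (u s : ℕ → ℕ)
    (hu : ∀ i < t, u i < u (i + 1)) (hutn : u t = n)
    (hm : m = ∑ i ∈ Finset.range (t + 1), s i)
    (Chor : ℕ → Submodule F (Fin n → F))
    (hnest : ∀ i, i + 1 < t → Chor (i + 1) < Chor i)
    (hCsys : ∀ i < t, SystematicOn (Chor i) (n - u i))
    (hCdist : ∀ i < t, HasMinDist (Chor i : Set (Fin n → F)) (u i + 1))
    (Vc : (i : ℕ) → Submodule F (Fin m → Fin (u (i + 1) - u i) → F))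
    (hVdim : ∀ i < t, Module.finrank F (Vc i)
        = (m - ∑ j ∈ Finset.Icc (i + 1) t, s j) * (u (i + 1) - u i))
    (hVdist : ∀ i < t, HasMinDist (Vc i : Set (Fin m → Fin (u (i + 1) - u i) → F))
        ((∑ j ∈ Finset.Icc (i + 1) t, s j) + 1)) :
    (∃ W : Submodule F (Matrix (Fin m) (Fin n) F),
      (W : Set (Matrix (Fin m) (Fin n) F)) = EIICode t u Chor Vc ∧
      Module.finrank F W = m * n - ∑ i ∈ Finset.range (t + 1), s i * u i) ∧
    (∀ A ∈ EIICode t u Chor Vc, A ≠ 0 →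
      (Finset.range t).inf' (Finset.nonempty_range_iff.mpr (by omega))
        (fun i => (u i + 1) * ((∑ j ∈ Finset.Icc (i + 1) t, s j) + 1)) ≤ arrayWt A) := by
  have hanti : AntitoneOn Chor (Set.Iio t) :=
    antitoneOn_of_add_one_le Set.ordConnected_Iio fun i _ _ hi => (hnest i hi).le
  have hmono : MonotoneOn u (Set.Iic t) :=
    monotoneOn_of_le_add_one Set.ordConnected_Iic fun i _ _ hi => (hu i hi).le
  refine ⟨⟨LinearMap.range (eiiEncode Vc hCsys), coe_range_eiiEncode hCsys hmono hutn, ?_⟩,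
    fun A hA hA0 => ?_⟩
  · rw [LinearMap.finrank_range_of_inj (eiiEncode_injective hanti hCsys hmono hutn),
      Module.finrank_pi_fintype, Fin.sum_univ_eq_sum_range (fun i => Module.finrank F (Vc i)),
      Finset.sum_congr rfl fun i hi => hVdim i (Finset.mem_range.1 hi), hm, ← hutn]
    exact sum_sub_sum_Icc_mul_sub s u fun i hi => (hu i hi).le
  · obtain ⟨i, hi, hwt⟩ := exists_mul_le_arrayWt_of_mem_EIICode hanti hCsys hmono hutn
      (fun i hi => (hCdist i hi).1) (fun i hi => (hVdist i hi).1) hA hA0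
    exact (Finset.inf'_le _ (Finset.mem_range.2 hi)).trans hwt
end

section
/- Let C(n,u) be a t-level EII code over a finite field F, the sum of the 1-level EII codes C(n,u^{(v)}), 0 ≤ v ≤ t−1. Suppose C = Σ_{v=0}^{t−1} C^{(v)} and D = Σ_{v=0}^{t−1} D^{(v)} with C^{(v)}, D^{(v)} ∈ C(n,u^{(v)}) for all v. If for some row index i the i-th row of C equals the i-th row of D, then for every v with 0 ≤ v ≤ t−1 the i-th row of C^{(v)} equals the i-th row of D^{(v)}. (Equivalently: each row of an array in C(n,u) uniquely determines the corresponding rows of its components in the codes C(n,u^{(v)}).) -/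
open scoped BigOperators

/-!
Subtract the two decompositions row by row: the differences `e v` of the `i`-th rows satisfy
`∑ v, e v = 0`, with `e v ∈ C_v` vanishing on the first `n - u_{v+1}` coordinates. Since the
horizontal codes are nested, `e 0 = -∑_{v ≥ 1} e v` lies in `C_1`, and a codeword of `C_1` that
vanishes on its `n - u_1` systematic coordinates is zero. Hence `e 0 = 0`, and the argument
repeats on the remaining levels.
-/

open Finset

theorem eq_zero_of_sum_range_eq_zero_of_antitoneOn {M S : Type*} [AddCommGroup M]
    [SetLike S M] [Preorder S] [IsConcreteLE S M] [AddSubgroupClass S M] {t : ℕ}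
    {C : ℕ → S} (hC : AntitoneOn C (Set.Iio t)) {e : ℕ → M} (he : ∀ v < t, e v ∈ C v)
    (hnext : ∀ v, v + 1 < t → e v ∈ C (v + 1) → e v = 0) (hsum : ∑ v ∈ range t, e v = 0) :
    ∀ v < t, e v = 0 := by
  induction t generalizing C e with
  | zero => simp
  | succ t ih =>
    rw [sum_range_succ'] at hsum
    have htail_mem : ∑ k ∈ range t, e (k + 1) ∈ C 1 := sum_mem fun k hk => by
      have hk : k < t := mem_range.mp hk
      have hle : C (k + 1) ≤ C 1 :=
        hC (by simp only [Set.mem_Iio]; omega) (by simp only [Set.mem_Iio]; omega) (by omega)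
      exact SetLike.le_def.mp hle (he (k + 1) (by omega))
    have he0 : e 0 = 0 := by
      rcases Nat.eq_zero_or_pos t with rfl | ht
      · simpa using hsum
      · refine hnext 0 (by omega) ?_
        rw [eq_neg_of_add_eq_zero_right hsum]
        exact neg_mem htail_mem
    have htail : ∀ k < t, e (k + 1) = 0 := by
      refine ih (C := fun k => C (k + 1)) (e := fun k => e (k + 1))
        (fun a ha b hb hab => hC ?_ ?_ (by omega)) (fun k hk => he (k + 1) (by omega))
        (fun k hk => hnext (k + 1) (by omega)) (by simpa [he0] using hsum)
      · simp only [Set.mem_Iio] at ha ⊢; omega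
      · simp only [Set.mem_Iio] at hb ⊢; omega
    rintro (_ | k) hk
    · exact he0
    · exact htail k (by omega)

theorem SystematicOn.eq_zero_of_forall_lt {F : Type*} [Field F] {n k : ℕ}
    {C : Submodule F (Fin n → F)} (hC : SystematicOn C k) {x : Fin n → F} (hx : x ∈ C)
    (hx0 : ∀ c : Fin n, (c : ℕ) < k → x c = 0) : x = 0 := by
  have : (⟨x, hx⟩ : C) = 0 := hC.1 <| funext fun j => by
    by_cases hj : (j : ℕ) < n
    · simpa [hj] using hx0 ⟨j, hj⟩ j.2
    · simp [hj]
  exact congrArg Subtype.val this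

theorem stmt10_general {F : Type*} [Field F]
    {t n m : ℕ}
    (u : ℕ → ℕ)
    (Chor : ℕ → Submodule F (Fin n → F))
    (hnest : ∀ i, i + 1 < t → Chor (i + 1) < Chor i)
    (hCsys : ∀ i < t, SystematicOn (Chor i) (n - u i))
    (Vc : (i : ℕ) → Submodule F (Fin m → Fin (u (i + 1) - u i) → F))
    (g h' : ℕ → Matrix (Fin m) (Fin n) F)
    (hg : ∀ v < t, g v ∈ OneLevelEII (Chor v) (Vc v) (n - u (v + 1)))
    (hh : ∀ v < t, h' v ∈ OneLevelEII (Chor v) (Vc v) (n - u (v + 1)))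
    (i : Fin m)
    (hrow : (∑ v ∈ Finset.range t, g v) i = (∑ v ∈ Finset.range t, h' v) i) :
    ∀ v < t, g v i = h' v i := by
  have hanti : AntitoneOn Chor (Set.Iio t) :=
    antitoneOn_of_succ_le Set.ordConnected_Iio fun a _ _ ha => (hnest a ha).le
  intro v hv
  rw [← sub_eq_zero]
  refine eq_zero_of_sum_range_eq_zero_of_antitoneOn hanti (e := fun v => g v i - h' v i)
    (fun w hw => sub_mem ((hg w hw).2.1 i) ((hh w hw).2.1 i)) ?_ ?_ v hv
  · intro w hw hmem
    refine (hCsys (w + 1) hw).eq_zero_of_forall_lt hmem fun c hc => ?_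
    simp [(hg w (by omega)).1 i c hc, (hh w (by omega)).1 i c hc]
  · ext c
    simpa [sum_sub_distrib, sub_eq_zero, Matrix.sum_apply] using congrFun hrow c

/-- In a t-level EII code, each row of an array uniquely determines
the corresponding rows of its 1-level components: if `C = Σ g v` and `D = Σ h' v` with
`g v, h' v` in the `v`-th 1-level component code and the `i`-th rows of `C` and `D`
coincide, then the `i`-th rows of `g v` and `h' v` coincide for every `v < t`. -/
theorem stmt10 {F : Type*} [Field F] [DecidableEq F]
    {t n m : ℕ} (ht : 1 ≤ t)
    (u s : ℕ → ℕ) (dH dV : ℕ → ℕ)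
    (hu : ∀ i < t, u i < u (i + 1)) (hun : u t ≤ n)
    (hs : ∀ i < t, 1 ≤ s i) (hst : s t = 0 → u t = n)
    (hm : m = ∑ i ∈ Finset.range (t + 1), s i)
    (Chor : ℕ → Submodule F (Fin n → F))
    (hnest : ∀ i, i + 1 < t → Chor (i + 1) < Chor i)
    (hCdim : ∀ i < t, Module.finrank F (Chor i) = n - u i)
    (hCsys : ∀ i < t, SystematicOn (Chor i) (n - u i))
    (hCdist : ∀ i < t, HasMinDist (Chor i : Set (Fin n → F)) (dH i))
    (Vc : (i : ℕ) → Submodule F (Fin m → Fin (u (i + 1) - u i) → F))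
    (hVdim : ∀ i < t, Module.finrank F (Vc i)
        = (m - ∑ j ∈ Finset.Icc (i + 1) t, s j) * (u (i + 1) - u i))
    (hVdist : ∀ i < t, HasMinDist (Vc i : Set (Fin m → Fin (u (i + 1) - u i) → F))
        (dV (t - 1 - i)))
    (g h' : ℕ → Matrix (Fin m) (Fin n) F)
    (hg : ∀ v < t, g v ∈ OneLevelEII (Chor v) (Vc v) (n - u (v + 1)))
    (hh : ∀ v < t, h' v ∈ OneLevelEII (Chor v) (Vc v) (n - u (v + 1)))
    (i : Fin m)
    (hrow : (∑ v ∈ Finset.range t, g v) i = (∑ v ∈ Finset.range t, h' v) i) :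
    ∀ v < t, g v i = h' v i :=
  stmt10_general u Chor hnest hCsys Vc g h' hg hh i hrow
end
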